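/- arXiv:1306.4298 — 5 statements merged into one kernel-verified Lean document; each statement's English description precedes it below -/
import Mathlib

section
/- Let s ≥ 1, let p be a prime, and let (m_d)_{d≥1} be rational numbers such that m_d - (1/p^s) m_{d/p} is p-integral for all d (with the convention m_{d/p} = 0 when p ∤ d). Define n_d = Σ_{k|d} μ(k) m_{d/k} / k^s. Then n_d is p-integral for every d ≥ 1. -/
open ArithmeticFunction

/-- A rational number is `p`-integral if its reduced denominator is not divisible by `p`. -/
def PIntegral (p : ℕ) (x : ℚ) : Prop := ¬ p ∣ x.den

/-!
The `p`-integral rationals form the valuation ring of the `p`-adic valuation, so Dirichlet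
convolutions of `p`-integral arithmetic functions are `p`-integral. Write `μₛ k = μ k / k ^ s`
and `E = δ₁ - p⁻ˢ δ_p`; the hypothesis says that `m * E` is `p`-integral. Since `μₛ` is
multiplicative and vanishes on multiples of `p²`, its Euler factor at `p` is exactly `E`:
`μₛ = μₛ' * E`, where `μₛ'` is the restriction of `μₛ` to integers prime to `p` and is
therefore `p`-integral. Hence `n = μₛ * m = μₛ' * (m * E)`.
-/

namespace ArithmeticFunction

variable {R : Type*} {p : ℕ}

def pointMass [Zero R] (p : ℕ) [NeZero p] (c : R) : ArithmeticFunction R :=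
  ⟨fun n => if n = p then c else 0, if_neg (NeZero.ne p).symm⟩

lemma pointMass_apply [Zero R] [NeZero p] (c : R) (n : ℕ) :
    pointMass p c n = if n = p then c else 0 :=
  rfl

def primeToPart [Zero R] (p : ℕ) (f : ArithmeticFunction R) : ArithmeticFunction R :=
  ⟨fun n => if p ∣ n then 0 else f n, if_pos (dvd_zero p)⟩

lemma primeToPart_apply [Zero R] (f : ArithmeticFunction R) (n : ℕ) :
    primeToPart p f n = if p ∣ n then 0 else f n :=
  rfl

lemma mul_pointMass_apply [Semiring R] [NeZero p] (f : ArithmeticFunction R) (c : R) (n : ℕ) :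
    (f * pointMass p c) n = if p ∣ n then f (n / p) * c else 0 := by
  rcases eq_or_ne n 0 with rfl | hn
  · simp
  classical
  rw [mul_apply, Nat.sum_divisorsAntidiagonal' (fun a b => f a * pointMass p c b)]
  simp only [pointMass_apply, mul_ite, mul_zero, Finset.sum_ite_eq', Nat.mem_divisors,
    and_iff_left hn]

lemma mul_one_sub_pointMass_apply [CommRing R] [NeZero p] (f : ArithmeticFunction R) (c : R)
    (n : ℕ) : (f * (1 - pointMass p c)) n = f n - if p ∣ n then f (n / p) * c else 0 := by
  rw [mul_sub, mul_one, sub_eq_add_neg, add_apply, neg_apply, mul_pointMass_apply,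
    ← sub_eq_add_neg]

lemma IsMultiplicative.eq_primeToPart_mul [CommRing R] [Fact p.Prime] {f : ArithmeticFunction R}
    (hf : f.IsMultiplicative) (hsq : ∀ n, p ^ 2 ∣ n → f n = 0) :
    f = primeToPart p f * (1 - pointMass p (-f p)) := by
  have hp : p.Prime := Fact.out
  ext n
  rw [mul_one_sub_pointMass_apply]
  by_cases hpn : p ∣ n
  · obtain ⟨j, rfl⟩ := hpn
    by_cases hpj : p ∣ j
    · simp [primeToPart_apply, hsq (p * j) (pow_two p ▸ mul_dvd_mul_left p hpj), hpj, hp.pos]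
    · rw [hf.map_mul_of_coprime (hp.coprime_iff_not_dvd.mpr hpj)]
      simp [primeToPart_apply, hpj, hp.pos]
      ring
  · simp [primeToPart_apply, hpn]

lemma mul_apply_mem [Ring R] {S : Subring R} {f g : ArithmeticFunction R} (hf : ∀ n, f n ∈ S)
    (hg : ∀ n, g n ∈ S) (n : ℕ) : (f * g) n ∈ S :=
  mul_apply (f := f) ▸ S.sum_mem fun x _ => S.mul_mem (hf x.1) (hg x.2)

lemma pdiv_moebius_pow_apply {s n : ℕ} (hn : n ≠ 0) :
    pdiv (moebius : ArithmeticFunction ℚ) (pow s) n = moebius n / (n : ℚ) ^ s := by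
  simp [pdiv_apply, natCoe_apply, pow_apply, hn]

lemma pdiv_moebius_pow_eq_primeToPart_mul [Fact p.Prime] (s : ℕ) :
    pdiv (moebius : ArithmeticFunction ℚ) (pow s)
      = primeToPart p (pdiv (moebius : ArithmeticFunction ℚ) (pow s))
          * (1 - pointMass p (1 / (p : ℚ) ^ s)) := by
  have hp : p.Prime := Fact.out
  have h := IsMultiplicative.eq_primeToPart_mul (p := p)
    (f := pdiv (moebius : ArithmeticFunction ℚ) (pow s))
    (isMultiplicative_moebius.intCast.pdiv isMultiplicative_pow.natCast) fun n hn => by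
      rw [pdiv_apply, intCoe_apply, moebius_eq_zero_of_not_squarefree
        fun hsq => Nat.squarefree_iff_prime_squarefree.1 hsq p hp (pow_two p ▸ hn),
        Int.cast_zero, zero_div]
  rwa [pdiv_moebius_pow_apply hp.ne_zero, moebius_apply_prime hp, Int.cast_neg, Int.cast_one,
    neg_div, neg_neg] at h

end ArithmeticFunction

section PIntegral

variable {p : ℕ} [Fact p.Prime]

lemma pIntegral_iff_mem_integer {x : ℚ} : PIntegral p x ↔ x ∈ (Rat.padicValuation p).integer :=
  Rat.padicValuation_le_one_iff.symm

lemma intCast_div_natCast_pow_mem_integer (a : ℤ) {k : ℕ} (hk : ¬ p ∣ k) (s : ℕ) :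
    (a : ℚ) / (k : ℚ) ^ s ∈ (Rat.padicValuation p).integer := by
  have hk1 : Rat.padicValuation p k = 1 := by
    rw [← Int.cast_natCast, Rat.padicValuation_cast, Int.padicValuation_eq_one_iff]
    exact_mod_cast hk
  rw [Valuation.mem_integer_iff, map_div₀, map_pow, hk1, one_pow, div_one, Rat.padicValuation_cast]
  exact Int.padicValuation_le_one p a

theorem pdiv_moebius_pow_mul_apply_mem_integer (s : ℕ) {M : ArithmeticFunction ℚ}
    (hM : ∀ n, (M * (1 - pointMass p (1 / (p : ℚ) ^ s))) n ∈ (Rat.padicValuation p).integer)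
    (n : ℕ) :
    (pdiv (moebius : ArithmeticFunction ℚ) (pow s) * M) n ∈ (Rat.padicValuation p).integer := by
  rw [pdiv_moebius_pow_eq_primeToPart_mul (p := p), mul_assoc, mul_comm (1 - _) M]
  refine mul_apply_mem (fun k => ?_) hM n
  rw [primeToPart_apply]
  split_ifs with hk
  · exact zero_mem _
  · rw [pdiv_moebius_pow_apply (by rintro rfl; exact hk (dvd_zero p))]
    exact intCast_div_natCast_pow_mem_integer _ hk s

end PIntegral

theorem stmt2_general (s : ℕ) (p : ℕ) (hp : p.Prime) (m : ℕ → ℚ)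
    (hm : ∀ d : ℕ, 1 ≤ d →
      PIntegral p (m d - (1 / (p : ℚ) ^ s) * (if p ∣ d then m (d / p) else 0))) :
    ∀ d : ℕ, 1 ≤ d →
      PIntegral p (∑ k ∈ d.divisors, (moebius k : ℚ) * m (d / k) / (k : ℚ) ^ s) := by
  have : Fact p.Prime := ⟨hp⟩
  let M : ArithmeticFunction ℚ := ⟨fun n => if n = 0 then 0 else m n, if_pos rfl⟩
  have hM : ∀ {n}, n ≠ 0 → M n = m n := fun hn => if_neg hn
  have hME : ∀ n, (M * (1 - pointMass p (1 / (p : ℚ) ^ s))) n ∈ (Rat.padicValuation p).integer := by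
    intro n
    rw [mul_one_sub_pointMass_apply]
    rcases eq_or_ne n 0 with rfl | hn
    · simp
    rw [← pIntegral_iff_mem_integer]
    convert hm n (Nat.one_le_iff_ne_zero.2 hn) using 2
    rw [hM hn]
    split_ifs with hpn
    · rw [hM (Nat.div_ne_zero_iff_of_dvd hpn |>.2 ⟨hn, hp.ne_zero⟩), mul_comm]
    · rw [mul_zero]
  intro d hd
  rw [pIntegral_iff_mem_integer]
  convert pdiv_moebius_pow_mul_apply_mem_integer s hME d using 1
  rw [mul_apply,
    Nat.sum_divisorsAntidiagonal fun a b => pdiv (moebius : ArithmeticFunction ℚ) (pow s) a * M b]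
  refine Finset.sum_congr rfl fun k hk => ?_
  obtain ⟨hkd, hd0⟩ := Nat.mem_divisors.1 hk
  have hk0 : k ≠ 0 := ne_zero_of_dvd_ne_zero hd0 hkd
  rw [pdiv_moebius_pow_apply hk0, hM (Nat.div_ne_zero_iff_of_dvd hkd |>.2 ⟨hd0, hk0⟩)]
  ring

/-- if `m_d - (1/p^s) m_{d/p}` is `p`-integral for all `d` (with
`m_{d/p} = 0` when `p ∤ d`), then `n_d = ∑_{k ∣ d} μ(k) m_{d/k} / k^s` is `p`-integral. -/
theorem stmt2 (s : ℕ) (hs : 1 ≤ s) (p : ℕ) (hp : p.Prime) (m : ℕ → ℚ)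
    (hm : ∀ d : ℕ, 1 ≤ d →
      PIntegral p (m d - (1 / (p : ℚ) ^ s) * (if p ∣ d then m (d / p) else 0))) :
    ∀ d : ℕ, 1 ≤ d →
      PIntegral p (∑ k ∈ d.divisors, (moebius k : ℚ) * m (d / k) / (k : ℚ) ^ s) :=
  stmt2_general s p hp m hm
end

section
/- Let s ≥ 1 and let (n_d)_{d≥1} be integers, and set m_d = (1/d^s) Σ_{k|d} k^s n_k. Then for every prime p and every d ≥ 1, the rational number m_d - (1/p^s) m_{d/p} is p-integral (with m_{d/p} = 0 if p ∤ d). -/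
/-! Write `d = p^a e` with `p ∤ e`. Since `(d/p)^s p^s = d^s`, the difference
`m_d - m_{d/p}/p^s` is `d^{-s}` times the sum of `k^s n_k` over the divisors `k` of `d` that do not
divide `d/p`. Each such `k` has cofactor `d/k` prime to `p`, hence is divisible by `p^a`, so
`k^s/d^s = (k/p^a)^s/e^s` and the whole difference is an integer divided by `e^s`. -/

lemma pIntegral_intCast_div {p e : ℕ} (A : ℤ) (hpe : ¬ p ∣ e) : PIntegral p (A / e) := by
  intro hden
  have hden_dvd : ((A / e : ℚ).den : ℤ) ∣ e := by
    simpa [Rat.divInt_eq_div] using Rat.den_dvd A e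
  exact hpe (hden.trans (Int.natCast_dvd_natCast.mp hden_dvd))

lemma pIntegral_intCast_div_pow {p e : ℕ} (hp : p.Prime) (A : ℤ) (s : ℕ) (hpe : ¬ p ∣ e) :
    PIntegral p (A / (e : ℚ) ^ s) := by
  simpa using pIntegral_intCast_div (e := e ^ s) A fun h => hpe (hp.dvd_of_dvd_pow h)

lemma Nat.ordProj_dvd_of_dvd_of_not_dvd_div {p d k : ℕ} (hp : p.Prime) (hkd : k ∣ d)
    (hk : ¬ k ∣ d / p) : ordProj[p] d ∣ k := by
  obtain ⟨c, rfl⟩ := hkd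
  have hpc : ¬ p ∣ c := by
    rintro ⟨c', rfl⟩
    refine hk ⟨c', ?_⟩
    rw [mul_left_comm, Nat.mul_div_cancel_left _ hp.pos]
  exact ((hp.coprime_iff_not_dvd.mpr hpc).pow_left _).dvd_of_dvd_mul_right (Nat.ordProj_dvd _ p)

lemma sub_one_div_pow_mul_eq_sum_sdiff {p d : ℕ} (hd : d ≠ 0) (hpd : p ∣ d) (s : ℕ)
    (f : ℕ → ℚ) :
    1 / (d : ℚ) ^ s * ∑ k ∈ d.divisors, f k
        - 1 / (p : ℚ) ^ s * (1 / ((d / p : ℕ) : ℚ) ^ s * ∑ k ∈ (d / p).divisors, f k)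
      = 1 / (d : ℚ) ^ s * ∑ k ∈ d.divisors \ (d / p).divisors, f k := by
  have hd_eq : (d : ℚ) = p * ((d / p : ℕ) : ℚ) := by exact_mod_cast (Nat.mul_div_cancel' hpd).symm
  rw [Finset.sum_sdiff_eq_sub (Nat.divisors_subset_of_dvd hd (Nat.div_dvd_of_dvd hpd)), hd_eq]
  ring

lemma one_div_pow_mul_pow_mul_eq_div {P d k : ℕ} (hP : P ≠ 0) (hPd : P ∣ d) (hPk : P ∣ k)
    (s : ℕ) (x : ℚ) :
    1 / (d : ℚ) ^ s * ((k : ℚ) ^ s * x) = ((k / P : ℕ) : ℚ) ^ s * x / ((d / P : ℕ) : ℚ) ^ s := by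
  have hP' : (P : ℚ) ≠ 0 := by exact_mod_cast hP
  rw [Nat.cast_div hPd hP', Nat.cast_div hPk hP', div_pow, div_pow]
  field_simp

lemma pIntegral_one_div_pow_mul_sum_sdiff {p d : ℕ} (hp : p.Prime) (hd : d ≠ 0) (hpd : p ∣ d)
    (s : ℕ) (n : ℕ → ℤ) :
    PIntegral p (1 / (d : ℚ) ^ s * ∑ k ∈ d.divisors \ (d / p).divisors, (k : ℚ) ^ s * n k) := by
  have hdp : d / p ≠ 0 := (Nat.div_pos (Nat.le_of_dvd (Nat.pos_of_ne_zero hd) hpd) hp.pos).ne'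
  have hterm : ∀ k ∈ d.divisors \ (d / p).divisors,
      1 / (d : ℚ) ^ s * ((k : ℚ) ^ s * n k)
        = ((k / ordProj[p] d : ℕ) : ℚ) ^ s * n k / ((ordCompl[p] d : ℕ) : ℚ) ^ s := by
    intro k hk
    simp only [Finset.mem_sdiff, Nat.mem_divisors, not_and, not_not] at hk
    have hk_not_dvd : ¬ k ∣ d / p := fun h => hdp (hk.2 h)
    exact one_div_pow_mul_pow_mul_eq_div (pow_ne_zero _ hp.ne_zero) (Nat.ordProj_dvd d p)
      (Nat.ordProj_dvd_of_dvd_of_not_dvd_div hp hk.1.1 hk_not_dvd) s _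
  rw [Finset.mul_sum, Finset.sum_congr rfl hterm, ← Finset.sum_div]
  simpa only [Int.cast_sum, Int.cast_mul, Int.cast_pow, Int.cast_natCast] using
    pIntegral_intCast_div_pow hp
      (∑ k ∈ d.divisors \ (d / p).divisors, ((k / ordProj[p] d : ℕ) : ℤ) ^ s * n k) s
      (Nat.not_dvd_ordCompl hp hd)

theorem stmt3_general (s : ℕ) (n : ℕ → ℤ) (m : ℕ → ℚ)
    (hm : ∀ d : ℕ, 1 ≤ d →
      m d = (1 / (d : ℚ) ^ s) * ∑ k ∈ d.divisors, (k : ℚ) ^ s * (n k : ℚ)) :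
    ∀ p : ℕ, p.Prime → ∀ d : ℕ, 1 ≤ d →
      PIntegral p (m d - (1 / (p : ℚ) ^ s) * (if p ∣ d then m (d / p) else 0)) := by
  intro p hp d hd
  have hd0 : d ≠ 0 := by omega
  by_cases hpd : p ∣ d
  · have hdp : 1 ≤ d / p := Nat.div_pos (Nat.le_of_dvd hd hpd) hp.pos
    rw [if_pos hpd, hm d hd, hm (d / p) hdp, sub_one_div_pow_mul_eq_sum_sdiff hd0 hpd]
    exact pIntegral_one_div_pow_mul_sum_sdiff hp hd0 hpd s n
  · rw [if_neg hpd, mul_zero, sub_zero, hm d hd, one_div_mul_eq_div]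
    exact_mod_cast pIntegral_intCast_div_pow hp (∑ k ∈ d.divisors, (k : ℤ) ^ s * n k) s hpd

/-- if `n_d ∈ ℤ` and `m_d = (1/d^s) ∑_{k ∣ d} k^s n_k`, then for every
prime `p` and every `d ≥ 1` the rational number `m_d - (1/p^s) m_{d/p}` is `p`-integral
(with `m_{d/p} = 0` if `p ∤ d`). -/
theorem stmt3 (s : ℕ) (hs : 1 ≤ s) (n : ℕ → ℤ) (m : ℕ → ℚ)
    (hm : ∀ d : ℕ, 1 ≤ d →
      m d = (1 / (d : ℚ) ^ s) * ∑ k ∈ d.divisors, (k : ℚ) ^ s * (n k : ℚ)) :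
    ∀ p : ℕ, p.Prime → ∀ d : ℕ, 1 ≤ d →
      PIntegral p (m d - (1 / (p : ℚ) ^ s) * (if p ∣ d then m (d / p) else 0)) :=
  stmt3_general s n m hm
end

section
/- A power series V(z) = Σ_{d≥1} m_d z^d ∈ ℚ[[z]] can be written as Σ_{d≥1} n_d Li_s(z^d) with all n_d ∈ ℤ if and only if for every prime p the series (1/p^s)·V(z^p) - V(z) has all coefficients p-integral. -/
open Finset ArithmeticFunction
open scoped ArithmeticFunction.Moebius

def pIntegralSubring {p : ℕ} (hp : p.Prime) : Subring ℚ where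
  carrier := {x | PIntegral p x}
  zero_mem' := hp.not_dvd_one
  one_mem' := hp.not_dvd_one
  add_mem' {x y} hx hy h := (hp.dvd_mul.mp (h.trans (Rat.add_den_dvd x y))).elim hx hy
  mul_mem' {x y} hx hy h := (hp.dvd_mul.mp (h.trans (Rat.mul_den_dvd x y))).elim hx hy
  neg_mem' {x} hx := by simpa [PIntegral, Rat.neg_den] using hx

theorem mem_pIntegralSubring {p : ℕ} (hp : p.Prime) {x : ℚ} :
    x ∈ pIntegralSubring hp ↔ PIntegral p x :=
  Iff.rfl

theorem div_natCast_pow_mem_pIntegralSubring {p k : ℕ} (hp : p.Prime) (hk : ¬ p ∣ k) (s : ℕ)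
    {x : ℚ} (hx : x ∈ pIntegralSubring hp) : x / (k : ℚ) ^ s ∈ pIntegralSubring hp := by
  rw [div_eq_mul_inv]
  refine mul_mem hx fun h => hk (hp.dvd_of_dvd_pow (n := s) ?_)
  rwa [← Nat.cast_pow, Rat.inv_natCast_den, if_neg (pow_ne_zero s (by rintro rfl; simp at hk))]
    at h

theorem den_eq_one_of_forall_pIntegral {x : ℚ} (hx : ∀ p, p.Prime → PIntegral p x) :
    x.den = 1 := by
  by_contra h
  obtain ⟨p, hp, hpx⟩ := Nat.exists_prime_and_dvd h
  exact hx p hp hpx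

/-- The coefficient of `z^d` in `∑_k n_k Li_s(z^k)`. -/
def liCoeff (s : ℕ) (n : ℕ → ℚ) (d : ℕ) : ℚ :=
  ∑ k ∈ d.divisors, n k / ((d / k : ℕ) : ℚ) ^ s

/-- The coefficient of `z^d` in `V(z) - p^{-s} V(z^p)`, where `V = ∑ m_d z^d`. -/
def frobeniusDefect (s p : ℕ) (m : ℕ → ℚ) (d : ℕ) : ℚ :=
  m d - (1 / (p : ℚ) ^ s) * (if p ∣ d then m (d / p) else 0)

theorem exists_liCoeff_eq (s : ℕ) (m : ℕ → ℚ) :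
    ∃ n : ℕ → ℚ, ∀ d, 1 ≤ d → m d = liCoeff s n d := by
  set b : ℕ → ℚ := fun d => ∑ x ∈ d.divisorsAntidiagonal, (μ x.1 : ℚ) * ((x.2 : ℚ) ^ s * m x.2)
  have hb : ∀ d : ℕ, d > 0 → ∑ k ∈ d.divisors, b k = (d : ℚ) ^ s * m d :=
    sum_eq_iff_sum_mul_moebius_eq.mpr fun _ _ => rfl
  refine ⟨fun k => b k / (k : ℚ) ^ s, fun d hd => ?_⟩
  have hd0 : (d : ℚ) ^ s ≠ 0 := pow_ne_zero _ (by positivity)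
  have hterm : ∀ k ∈ d.divisors, b k / (k : ℚ) ^ s / ((d / k : ℕ) : ℚ) ^ s = b k / (d : ℚ) ^ s := by
    intro k hk
    rw [div_div, ← mul_pow, ← Nat.cast_mul, Nat.mul_div_cancel' (Nat.dvd_of_mem_divisors hk)]
  rw [liCoeff, sum_congr rfl hterm, ← sum_div, hb d hd, mul_div_cancel_left₀ _ hd0]

theorem filter_dvd_div_divisors {p d : ℕ} (hpd : p ∣ d) (hd : d ≠ 0) :
    {k ∈ d.divisors | p ∣ d / k} = (d / p).divisors := by
  ext k
  have hdp : d / p ≠ 0 := (Nat.div_pos (Nat.le_of_dvd (by omega) hpd)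
    (Nat.pos_of_dvd_of_pos hpd (by omega))).ne'
  simp only [mem_filter, Nat.mem_divisors, Nat.dvd_div_iff_mul_dvd hpd, hd, hdp, ne_eq,
    not_false_eq_true, and_true]
  constructor
  · rintro ⟨hkd, hpk⟩
    rwa [Nat.dvd_div_iff_mul_dvd hkd, mul_comm] at hpk
  · intro hpk
    have hkd : k ∣ d := (Dvd.intro_left p rfl).trans hpk
    rwa [Nat.dvd_div_iff_mul_dvd hkd, mul_comm, and_iff_right hkd]

section Representation

variable {s p : ℕ} {m : ℕ → ℚ}

theorem frobeniusDefect_eq_sum {n : ℕ → ℚ} (hrep : ∀ d, 1 ≤ d → m d = liCoeff s n d)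
    (hp : 0 < p) {d : ℕ} (hd : 1 ≤ d) :
    frobeniusDefect s p m d = ∑ k ∈ d.divisors with ¬ p ∣ d / k, n k / ((d / k : ℕ) : ℚ) ^ s := by
  rw [frobeniusDefect, hrep d hd]
  split_ifs with hpd
  · have hshift : ∑ k ∈ (d / p).divisors, 1 / (p : ℚ) ^ s * (n k / ((d / p / k : ℕ) : ℚ) ^ s)
        = ∑ k ∈ (d / p).divisors, n k / ((d / k : ℕ) : ℚ) ^ s := by
      refine sum_congr rfl fun k hk => ?_
      have hk0 : 0 < k := Nat.pos_of_mem_divisors hk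
      obtain ⟨t, rfl⟩ := (Nat.dvd_div_iff_mul_dvd hpd).mp (Nat.dvd_of_mem_divisors hk)
      rw [Nat.div_div_eq_div_mul, Nat.mul_div_cancel_left t (Nat.mul_pos hp hk0),
        show p * k * t = p * t * k by ring, Nat.mul_div_cancel _ hk0]
      push_cast
      rw [mul_pow]
      field_simp
    rw [hrep _ (Nat.div_pos (Nat.le_of_dvd hd hpd) hp), liCoeff, liCoeff, mul_sum, hshift,
      ← filter_dvd_div_divisors hpd (by omega), sub_eq_iff_eq_add', sum_filter_add_sum_filter_not]
  · rw [mul_zero, sub_zero, liCoeff, filter_true_of_mem]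
    intro k hk hpk
    exact hpd (hpk.trans (Nat.div_dvd_of_dvd (Nat.dvd_of_mem_divisors hk)))

theorem pIntegral_frobeniusDefect_of_int {n : ℕ → ℤ}
    (hrep : ∀ d, 1 ≤ d → m d = liCoeff s (fun k => (n k : ℚ)) d) (hp : p.Prime) {d : ℕ}
    (hd : 1 ≤ d) :
    PIntegral p (frobeniusDefect s p m d) := by
  rw [← mem_pIntegralSubring hp, frobeniusDefect_eq_sum hrep hp.pos hd]
  exact sum_mem fun k hk =>
    div_natCast_pow_mem_pIntegralSubring hp (mem_filter.mp hk).2 s (intCast_mem _ _)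

theorem pIntegral_of_pIntegral_frobeniusDefect {n : ℕ → ℚ}
    (hrep : ∀ d, 1 ≤ d → m d = liCoeff s n d) (hp : p.Prime)
    (hm : ∀ d, 1 ≤ d → PIntegral p (frobeniusDefect s p m d)) {d : ℕ}
    (hd : 1 ≤ d) : PIntegral p (n d) := by
  induction d using Nat.strong_induction_on with
  | _ d ih =>
    have hdmem : d ∈ {k ∈ d.divisors | ¬ p ∣ d / k} :=
      mem_filter.mpr ⟨Nat.mem_divisors_self d (by omega), by
        rw [Nat.div_self hd]; exact hp.not_dvd_one⟩
    have hsplit := frobeniusDefect_eq_sum hrep hp.pos hd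
    rw [← add_sum_erase _ _ hdmem, Nat.div_self hd, Nat.cast_one, one_pow, div_one,
      ← sub_eq_iff_eq_add] at hsplit
    rw [← mem_pIntegralSubring hp, ← hsplit]
    refine sub_mem (hm d hd) (sum_mem fun k hk => ?_)
    obtain ⟨hkd, hk⟩ := mem_erase.mp hk
    obtain ⟨hk, hpk⟩ := mem_filter.mp hk
    exact div_natCast_pow_mem_pIntegralSubring hp hpk s
      (ih k (lt_of_le_of_ne (Nat.divisor_le hk) hkd) (Nat.pos_of_mem_divisors hk))

end Representation

theorem stmt4_general (s : ℕ) (m : ℕ → ℚ) :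
    (∃ n : ℕ → ℤ, ∀ d : ℕ, 1 ≤ d →
        m d = ∑ k ∈ d.divisors, (n k : ℚ) / ((d / k : ℕ) : ℚ) ^ s) ↔
    (∀ p : ℕ, p.Prime → ∀ d : ℕ, 1 ≤ d →
        PIntegral p (m d - (1 / (p : ℚ) ^ s) * (if p ∣ d then m (d / p) else 0))) := by
  constructor
  · rintro ⟨n, hn⟩ p hp d hd
    exact pIntegral_frobeniusDefect_of_int hn hp hd
  · intro H
    obtain ⟨n, hn⟩ := exists_liCoeff_eq s m
    have hint : ∀ d, 1 ≤ d → ((n d).num : ℚ) = n d := fun d hd =>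
      Rat.coe_int_num_of_den_eq_one <| den_eq_one_of_forall_pIntegral fun p hp =>
        pIntegral_of_pIntegral_frobeniusDefect hn hp (H p hp) hd
    refine ⟨fun k => (n k).num, fun d hd => (hn d hd).trans (sum_congr rfl fun k hk => ?_)⟩
    rw [hint k (Nat.pos_of_mem_divisors hk)]

/-- a power series `V(z) = ∑_{d≥1} m_d z^d ∈ ℚ[[z]]` can be written as
`∑_{d≥1} n_d Li_s(z^d)` with all `n_d ∈ ℤ` if and only if for every prime `p` the
series `(1/p^s) V(z^p) - V(z)` has all coefficients `p`-integral, i.e.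
`m_d - (1/p^s) m_{d/p}` is `p`-integral for every `d` (with `m_{d/p} = 0` if `p ∤ d`). -/
theorem stmt4 (s : ℕ) (hs : 1 ≤ s) (m : ℕ → ℚ) :
    (∃ n : ℕ → ℤ, ∀ d : ℕ, 1 ≤ d →
        m d = ∑ k ∈ d.divisors, (n k : ℚ) / ((d / k : ℕ) : ℚ) ^ s) ↔
    (∀ p : ℕ, p.Prime → ∀ d : ℕ, 1 ≤ d →
        PIntegral p (m d - (1 / (p : ℚ) ^ s) * (if p ∣ d then m (d / p) else 0))) :=
  stmt4_general s m
end

section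
/- In the ring of formal power series, the framing transformations form a group action of ℤ: if Y(z) ∈ ℤ[[z]] has constant term 1 and Y_f denotes the unique power series with constant term 1 satisfying Y_f(z) = Y(z·(-Y_f(z))^f), then (Y_f)_{f'} = Y_{f+f'} for all integers f, f'. -/
/-!
For `g` without constant term, `PScomp a g` is the substitution `a ∘ g`, which is associative
and a ring homomorphism in `a`, hence commutes with integer powers of units. Writing
`w = z (-Y_f)^f` and `u = z (-B)^{f'}`, the framing equation gives
`B = Y_f ∘ u = Y ∘ (w ∘ u)`, and `w ∘ u = u · (-(Y_f ∘ u))^f = z (-B)^{f'} (-B)^f`,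
so `B` satisfies the framing-by-`(f + f')` equation, whose solution is unique.
-/

open PowerSeries

noncomputable section

/-- Composition `f ∘ g` of formal power series (intended for `g` with zero constant
term, in which case the coefficient of `zⁿ` only involves the truncation below). -/
def PScomp (f g : ℚ⟦X⟧) : ℚ⟦X⟧ :=
  PowerSeries.mk fun n =>
    coeff n (∑ k ∈ Finset.range (n + 1), coeff k f • g ^ k)

/-- `exp(g)` for a formal power series `g` with zero constant term. -/
def expPS (g : ℚ⟦X⟧) : ℚ⟦X⟧ :=
  PowerSeries.mk fun n =>
    coeff n (∑ k ∈ Finset.range (n + 1), ((k.factorial : ℚ)⁻¹) • g ^ k)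

/-- The series `log(1+t) = ∑_{n≥1} (-1)^{n+1} tⁿ/n`. -/
def logOneAdd : ℚ⟦X⟧ :=
  PowerSeries.mk fun n => if n = 0 then 0 else (-1) ^ (n + 1) / n

/-- `log Y` for a power series `Y` with constant term `1`. -/
def logPS (Y : ℚ⟦X⟧) : ℚ⟦X⟧ := PScomp logOneAdd (Y - 1)

/-- Integer power `f ^ n` for `n : ℤ`, using the inverse in `ℚ⟦X⟧`. -/
def zpPS (f : ℚ⟦X⟧) (n : ℤ) : ℚ⟦X⟧ :=
  if 0 ≤ n then f ^ n.toNat else f⁻¹ ^ (-n).toNat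

/-- The logarithmic derivative `δ = z d/dz` on `ℚ⟦X⟧`. -/
def deltaPS (f : ℚ⟦X⟧) : ℚ⟦X⟧ := X * d⁄dX ℚ f

end

namespace PowerSeries

lemma subst_neg {R S : Type*} [CommRing R] [CommRing S] [Algebra R S] {a : S⟦X⟧}
    (ha : HasSubst a) (f : R⟦X⟧) : (-f).subst a = -f.subst a := by
  rw [← coe_substAlgHom ha, map_neg]

lemma coeff_pow_eq_zero_of_lt {R : Type*} [Semiring R] {g : R⟦X⟧} (hg : constantCoeff g = 0) {n d : ℕ} (h : n < d) :
    coeff n (g ^ d) = 0 :=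
  coeff_of_lt_order n <|
    (Nat.cast_lt.mpr h).trans_le (le_order_pow_of_constantCoeff_eq_zero d hg)

lemma PScomp_eq_subst {g : ℚ⟦X⟧} (hg : constantCoeff g = 0) (a : ℚ⟦X⟧) :
    PScomp a g = a.subst g := by
  ext n
  rw [coeff_subst' (HasSubst.of_constantCoeff_zero' hg), PScomp, coeff_mk, map_sum,
    finsum_eq_sum_of_support_subset _ (s := Finset.range (n + 1))]
  · simp only [coeff_smul]
  · intro d hd
    rw [Finset.coe_range, Set.mem_Iio]
    by_contra! hdn
    exact hd (by simp only [coeff_pow_eq_zero_of_lt hg (by omega : n < d), smul_zero])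

lemma zpPS_eq_val_zpow {a : ℚ⟦X⟧} (ha : IsUnit a) (m : ℤ) :
    zpPS a m = ↑(ha.unit ^ m) := by
  unfold zpPS
  split_ifs with hm
  · obtain ⟨k, rfl⟩ : ∃ k : ℕ, m = k := ⟨m.toNat, by omega⟩
    simp
  · obtain ⟨k, rfl⟩ : ∃ k : ℕ, m = -k := ⟨(-m).toNat, by omega⟩
    have hinv : ↑ha.unit⁻¹ = a⁻¹ :=
      (eq_inv_iff_mul_eq_one (isUnit_iff_constantCoeff.mp ha).ne_zero).mpr ha.val_inv_mul
    simp [hinv]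

lemma zpPS_add {a : ℚ⟦X⟧} (ha : IsUnit a) (m n : ℤ) :
    zpPS a (m + n) = zpPS a m * zpPS a n := by
  simp only [zpPS_eq_val_zpow ha, zpow_add, Units.val_mul]

lemma map_zpPS (φ : ℚ⟦X⟧ →+* ℚ⟦X⟧) {a : ℚ⟦X⟧} (ha : IsUnit a) (m : ℤ) :
    φ (zpPS a m) = zpPS (φ a) m := by
  have hφ := Units.coe_map (φ : ℚ⟦X⟧ →* ℚ⟦X⟧) (ha.unit ^ m)
  rw [map_zpow] at hφ
  rw [zpPS_eq_val_zpow ha, zpPS_eq_val_zpow (ha.map φ),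
    show (ha.map φ).unit = Units.map (φ : ℚ⟦X⟧ →* ℚ⟦X⟧) ha.unit from Units.ext rfl, hφ]
  rfl

lemma subst_X_mul_zpPS {u : ℚ⟦X⟧} (hu : constantCoeff u = 0) {a : ℚ⟦X⟧} (ha : IsUnit a)
    (m : ℤ) : (X * zpPS a m).subst u = u * zpPS (a.subst u) m := by
  have hu' := HasSubst.of_constantCoeff_zero' hu
  rw [subst_mul hu', subst_X hu', ← coe_substAlgHom hu', ← RingHom.coe_coe,
    map_zpPS _ ha]

end PowerSeries

open PowerSeries in
theorem stmt8_general (Y : ℚ⟦X⟧)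
    (Yf : ℤ → ℚ⟦X⟧)
    (hYf1 : ∀ f : ℤ, constantCoeff (Yf f) = 1)
    (hYf : ∀ f : ℤ, Yf f = PScomp Y (X * zpPS (-(Yf f)) f))
    (hYfuniq : ∀ f : ℤ, ∀ A : ℚ⟦X⟧, constantCoeff A = 1 →
      A = PScomp Y (X * zpPS (-A) f) → A = Yf f) :
    ∀ f f' : ℤ, ∀ B : ℚ⟦X⟧, constantCoeff B = 1 →
      B = PScomp (Yf f) (X * zpPS (-B) f') → B = Yf (f + f') := by
  intro f f' B hB1 hB
  have isUnit_neg {A : ℚ⟦X⟧} (hA : constantCoeff A = 1) : IsUnit (-A) :=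
    isUnit_iff_constantCoeff.mpr (by simp [hA])
  have hu : constantCoeff (X * zpPS (-B) f') = 0 := by simp
  have hw : constantCoeff (X * zpPS (-Yf f) f) = 0 := by simp
  rw [PScomp_eq_subst hu] at hB
  have hframe : (X * zpPS (-Yf f) f).subst (X * zpPS (-B) f') = X * zpPS (-B) (f + f') := by
    rw [subst_X_mul_zpPS hu (isUnit_neg (hYf1 f)), subst_neg (.of_constantCoeff_zero' hu), ← hB,
      zpPS_add (isUnit_neg hB1)]
    ring
  refine hYfuniq (f + f') B hB1 ?_
  calc B = subst (X * zpPS (-B) f') (Yf f) := hB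
    _ = subst (X * zpPS (-B) f') (subst (X * zpPS (-Yf f) f) Y) := by
      rw [← PScomp_eq_subst hw, ← hYf f]
    _ = subst (X * zpPS (-B) (f + f')) Y := by
      rw [subst_comp_subst_apply (.of_constantCoeff_zero' hw) (.of_constantCoeff_zero' hu),
        hframe]
    _ = PScomp Y (X * zpPS (-B) (f + f')) := (PScomp_eq_subst (by simp) _).symm

open PowerSeries in
/-- framing is a group action of `ℤ`.  For `Y ∈ ℤ[[z]]` with constant
term 1, let `Y_f` denote the unique power series with constant term 1 satisfying
`Y_f(z) = Y(z · (-Y_f(z))^f)` (uniqueness is part of the hypotheses).  Then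
`(Y_f)_{f'} = Y_{f+f'}` for all integers `f, f'`: any series `B` with constant term 1
satisfying the framing-by-`f'` equation for `Y_f` equals `Y_{f+f'}`. -/
theorem stmt8 (Y : ℚ⟦X⟧) (hY1 : constantCoeff Y = 1)
    (hYint : ∀ k : ℕ, ∃ a : ℤ, coeff k Y = a)
    (Yf : ℤ → ℚ⟦X⟧)
    (hYf1 : ∀ f : ℤ, constantCoeff (Yf f) = 1)
    (hYf : ∀ f : ℤ, Yf f = PScomp Y (X * zpPS (-(Yf f)) f))
    (hYfuniq : ∀ f : ℤ, ∀ A : ℚ⟦X⟧, constantCoeff A = 1 →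
      A = PScomp Y (X * zpPS (-A) f) → A = Yf f) :
    ∀ f f' : ℤ, ∀ B : ℚ⟦X⟧, constantCoeff B = 1 →
      B = PScomp (Yf f) (X * zpPS (-B) f') → B = Yf (f + f') :=
  stmt8_general Y Yf hYf1 hYf hYfuniq
end

section
/- Let Y ∈ ℚ[[z]] with constant term 1, let Ỹ be its framing transform (defined by z = -z̃ Ỹ(z̃) where z̃ = -z Y(z)), and let Y_1 be the unique series with constant term 1 satisfying Y_1(z) = Y(-z Y_1(z)). Then Y_1 equals the framing transform of Y^{-1}, i.e., Y_1 = (Y^{-1})~. -/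
open PowerSeries

lemma PowerSeries.coeff_pow_eq_zero_of_lt_s10 {R : Type*} [CommRing R] {g : R⟦X⟧}
    (hg : constantCoeff g = 0) {n k : ℕ} (h : n < k) : coeff n (g ^ k) = 0 :=
  X_pow_dvd_iff.mp (pow_dvd_pow_of_dvd (X_dvd_iff.mpr hg) k) n h

theorem PScomp_eq_subst (f : ℚ⟦X⟧) {g : ℚ⟦X⟧} (hg : constantCoeff g = 0) :
    PScomp f g = f.subst g := by
  ext n
  rw [coeff_subst' (HasSubst.of_constantCoeff_zero' hg), PScomp, coeff_mk, map_sum]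
  symm
  apply finsum_eq_sum_of_support_subset
  intro k hk
  by_contra hkn
  simp only [Finset.coe_range, Set.mem_Iio, not_lt] at hkn
  exact hk (by dsimp only; rw [coeff_pow_eq_zero_of_lt_s10 hg (by omega), smul_zero])

theorem coeff_PScomp_congr (f : ℚ⟦X⟧) {a b : ℚ⟦X⟧} {n : ℕ} (h : X ^ (n + 1) ∣ a - b) :
    coeff n (PScomp f a) = coeff n (PScomp f b) := by
  simp only [PScomp, coeff_mk, map_sum, map_smul]
  refine Finset.sum_congr rfl fun k _ => congrArg _ ?_
  rw [← sub_eq_zero, ← map_sub]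
  exact X_pow_dvd_iff.mp (h.trans (sub_dvd_pow_sub_pow a b k)) n n.lt_succ_self

/-- Since `h` has no constant term, the coefficient of `zⁿ` in `f(h A)` only sees the
coefficients of `A` below `n`, so the fixed point is determined coefficient by coefficient. -/
theorem eq_of_eq_PScomp_mul_self (f : ℚ⟦X⟧) {h A B : ℚ⟦X⟧} (hh : constantCoeff h = 0)
    (hA : A = PScomp f (h * A)) (hB : B = PScomp f (h * B)) : A = B := by
  suffices ∀ n, X ^ n ∣ A - B by
    ext n
    simpa [sub_eq_zero] using X_pow_dvd_iff.mp (this (n + 1)) n n.lt_succ_self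
  intro n
  induction n with
  | zero => simp
  | succ n ih =>
    have hdvd : X ^ (n + 1) ∣ h * A - h * B := by
      rw [← mul_sub, pow_succ']
      exact mul_dvd_mul (X_dvd_iff.mpr hh) ih
    refine X_pow_dvd_iff.mpr fun m hm => ?_
    have hcoeff := coeff_PScomp_congr f (dvd_trans (pow_dvd_pow X hm) hdvd)
    rw [← hA, ← hB] at hcoeff
    rw [map_sub, hcoeff, sub_self]

/-- If `z ↦ -z Z(z)` inverts `z ↦ -z Y⁻¹(z)`, then substituting `g = -z Z` turns
`-g Y⁻¹(g) = z` into `Z = Y(g)`. -/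
theorem eq_PScomp_of_PScomp_neg_X_mul_inv {Y Z : ℚ⟦X⟧} (hY : constantCoeff Y ≠ 0)
    (hZ : PScomp (-(X * Y⁻¹)) (-(X * Z)) = X) : Z = PScomp Y (-(X * Z)) := by
  set g : ℚ⟦X⟧ := -(X * Z) with hg_def
  have hg : constantCoeff g = 0 := by simp [g]
  have hsub := HasSubst.of_constantCoeff_zero' hg
  set φ : ℚ⟦X⟧ →ₐ[ℚ] ℚ⟦X⟧ := substAlgHom hsub
  have hφ (f : ℚ⟦X⟧) : PScomp f g = φ f := by rw [coe_substAlgHom, PScomp_eq_subst f hg]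
  have hinv : Z * φ Y⁻¹ = 1 := by
    rw [hφ, map_neg, map_mul, substAlgHom_X, hg_def] at hZ
    apply mul_left_cancel₀ (X_ne_zero (R := ℚ))
    linear_combination hZ
  have hYinv : φ Y * φ Y⁻¹ = 1 := by rw [← map_mul, PowerSeries.mul_inv_cancel Y hY, map_one]
  rw [hφ]
  calc Z = Z * (φ Y⁻¹ * φ Y) := by rw [mul_comm (φ Y⁻¹), hYinv, mul_one]
    _ = φ Y := by rw [← mul_assoc, hinv, one_mul]

open PowerSeries in
theorem stmt10_general (Y : ℚ⟦X⟧) (hY1 : constantCoeff Y = 1)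
    (Y1 : ℚ⟦X⟧)
    (hY1eq : Y1 = PScomp Y (-(X * Y1)))
    (Z : ℚ⟦X⟧)
    (hZ : PScomp (-(X * Y⁻¹)) (-(X * Z)) = X) :
    Y1 = Z := by
  have hZeq := eq_PScomp_of_PScomp_neg_X_mul_inv (by simp [hY1]) hZ
  rw [← neg_mul] at hY1eq hZeq
  exact eq_of_eq_PScomp_mul_self Y (by simp) hY1eq hZeq

open PowerSeries in
/-- for `Y` with constant term 1, the series `Y₁` (constant term 1,
satisfying `Y₁(z) = Y(-z Y₁(z))`, i.e. framing by `f = 1`) equals the framing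
transform of `Y⁻¹`, i.e. the unique `Z` with constant term 1 such that
`z ↦ -z Z(z)` is the compositional inverse of `z ↦ -z Y⁻¹(z)`. -/
theorem stmt10 (Y : ℚ⟦X⟧) (hY1 : constantCoeff Y = 1)
    (Y1 : ℚ⟦X⟧) (hY11 : constantCoeff Y1 = 1)
    (hY1eq : Y1 = PScomp Y (-(X * Y1)))
    (Z : ℚ⟦X⟧) (hZ1 : constantCoeff Z = 1)
    (hZ : PScomp (-(X * Y⁻¹)) (-(X * Z)) = X) :
    Y1 = Z :=
  stmt10_general Y hY1 Y1 hY1eq Z hZ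
end
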